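/- arXiv:2103.14913 — 5 statements merged into one kernel-verified Lean document; each statement's English description precedes it below -/
import Mathlib

section
/- Let 𝒱* = 𝒱_n be the limit of the augmented Wong sequence 𝒱₀ = ℝⁿ, 𝒱_{i+1} = H⁻¹(E𝒱_i + Im L). Then 𝒱* is (H,E;Im L)-invariant, i.e. H𝒱* ⊆ E𝒱* + Im L, and it is the largest such subspace: every subspace V ⊆ ℝⁿ with HV ⊆ EV + Im L satisfies V ⊆ 𝒱*. -/
set_option maxHeartbeats 1000000


open Matrix

/-- The limit `𝒱* = 𝒱ₙ` of the augmented Wong sequence is `(H, E; Im L)`-invariant and is the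
largest subspace with this property. -/
theorem stmt10 (l n m : ℕ) (E H : Matrix (Fin l) (Fin n) ℝ) (L : Matrix (Fin l) (Fin m) ℝ)
    (V : ℕ → Submodule ℝ (Fin n → ℝ)) (hV0 : V 0 = ⊤)
    (hV : ∀ i, V (i + 1) =
      Submodule.comap H.mulVecLin
        (Submodule.map E.mulVecLin (V i) ⊔ LinearMap.range L.mulVecLin)) :
    (Submodule.map H.mulVecLin (V n) ≤
      Submodule.map E.mulVecLin (V n) ⊔ LinearMap.range L.mulVecLin) ∧
    ∀ U : Submodule ℝ (Fin n → ℝ),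
      Submodule.map H.mulVecLin U ≤ Submodule.map E.mulVecLin U ⊔ LinearMap.range L.mulVecLin →
      U ≤ V n := by
  -- antitone
  have hmono : ∀ i, V (i + 1) ≤ V i := by
    intro i
    induction i with
    | zero => rw [hV0]; exact le_top
    | succ k ih =>
      rw [hV (k + 1), hV k]
      gcongr
      exact (hV k).symm.trans_le ih
  -- stabilization
  have hstab : ∀ k, V (k + 1) = V k → ∀ j, V (k + j) = V k := by
    intro k hk j
    induction j with
    | zero => rfl
    | succ i ih =>
      have : V (k + i + 1) = V (k + 1) := by rw [hV (k + i), hV k, ih]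
      rw [show k + (i + 1) = k + i + 1 from rfl, this, hk]
  have hexists : ∃ k ≤ n, V (k + 1) = V k := by
    by_contra hcon
    push_neg at hcon
    have hstrict : ∀ k ≤ n, V (k + 1) < V k := fun k hk =>
      lt_of_le_of_ne (hmono k) (hcon k hk)
    have hdim : ∀ k, k ≤ n + 1 →
        Module.finrank ℝ (V k) + k ≤ Module.finrank ℝ (V 0) := by
      intro k hk
      induction k with
      | zero => simp
      | succ i ih =>
        have h1 := Submodule.finrank_lt_finrank_of_lt (hstrict i (Nat.lt_succ_iff.mp hk))
        have h2 := ih (Nat.le_of_succ_le hk)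
        omega
    have h0 : Module.finrank ℝ (V 0) = n := by
      rw [hV0, finrank_top]; simp
    have := hdim (n + 1) le_rfl
    omega
  obtain ⟨k, hkn, hk⟩ := hexists
  have hnk : V n = V k := by
    have := hstab k hk (n - k)
    rwa [Nat.add_sub_cancel' hkn] at this
  have hn1 : V (n + 1) = V n := by
    have := hstab k hk (n + 1 - k)
    rw [Nat.add_sub_cancel' (le_trans hkn (Nat.le_succ n))] at this
    rw [this, hnk]
  constructor
  · rw [Submodule.map_le_iff_le_comap, ← hV n, hn1]
  · intro U hU
    have key : ∀ i, U ≤ V i := by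
      intro i
      induction i with
      | zero => rw [hV0]; exact le_top
      | succ j ih =>
        rw [hV j]
        refine le_trans (Submodule.map_le_iff_le_comap.mp hU) ?_
        gcongr
    exact key n
end

section
/- The augmented Wong sequences transform naturally under external feedback equivalence: if Ẽ = QEP⁻¹, H̃ = Q(H+LF)P⁻¹, L̃ = QLG with Q ∈ GL(l,ℝ), P ∈ GL(n,ℝ), F ∈ ℝ^{m×n}, G ∈ GL(m,ℝ), then for every i ∈ ℕ, 𝒱_i(Ẽ,H̃,L̃) = P·𝒱_i(E,H,L) and 𝒲_i(Ẽ,H̃,L̃) = P·𝒲_i(E,H,L), where 𝒱₀ = ℝⁿ, 𝒱_{i+1} = H⁻¹(E𝒱_i + Im L), 𝒲₀ = 0, 𝒲_{i+1} = E⁻¹(H𝒲_i + Im L) (and analogously with tildes). -/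
open Matrix
open Matrix

section Aux
variable {l n m k : ℕ}

lemma comap_inv_eq_map (P : Matrix (Fin n) (Fin n) ℝ) (hP : IsUnit P)
    (S : Submodule ℝ (Fin n → ℝ)) :
    Submodule.comap P⁻¹.mulVecLin S = Submodule.map P.mulVecLin S := by
  have hd : IsUnit P.det := (Matrix.isUnit_iff_isUnit_det P).mp hP
  ext x
  simp only [Submodule.mem_comap, Submodule.mem_map, Matrix.mulVecLin_apply]
  constructor
  · intro h
    exact ⟨P⁻¹.mulVec x, h, by
      rw [Matrix.mulVec_mulVec, Matrix.mul_nonsing_inv _ hd, Matrix.one_mulVec]⟩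
  · rintro ⟨y, hy, rfl⟩
    rwa [Matrix.mulVec_mulVec, Matrix.nonsing_inv_mul _ hd, Matrix.one_mulVec]

lemma key (A B : Matrix (Fin l) (Fin n) ℝ) (L : Matrix (Fin l) (Fin m) ℝ)
    (Q : Matrix (Fin l) (Fin l) ℝ) (P : Matrix (Fin n) (Fin n) ℝ)
    (G : Matrix (Fin m) (Fin m) ℝ) (hQ : IsUnit Q) (hP : IsUnit P) (hG : IsUnit G)
    (S : Submodule ℝ (Fin n → ℝ)) :
    Submodule.comap (Q * A * P⁻¹).mulVecLin
      (Submodule.map (Q * B * P⁻¹).mulVecLin (Submodule.map P.mulVecLin S)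
        ⊔ LinearMap.range (Q * L * G).mulVecLin)
    = Submodule.map P.mulVecLin
      (Submodule.comap A.mulVecLin
        (Submodule.map B.mulVecLin S ⊔ LinearMap.range L.mulVecLin)) := by
  have hPd : IsUnit P.det := (Matrix.isUnit_iff_isUnit_det P).mp hP
  have hQd : IsUnit Q.det := (Matrix.isUnit_iff_isUnit_det Q).mp hQ
  have hQinj : Function.Injective Q.mulVecLin := by
    intro x y hxy
    have := congrArg (Q⁻¹.mulVec) hxy
    simpa [Matrix.mulVecLin_apply, Matrix.mulVec_mulVec,
      Matrix.nonsing_inv_mul _ hQd, Matrix.one_mulVec] using this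
  have hGsurj : Function.Surjective G.mulVecLin := by
    intro y
    exact ⟨G⁻¹.mulVec y, by
      simp [Matrix.mulVecLin_apply, Matrix.mulVec_mulVec,
        Matrix.mul_nonsing_inv _ ((Matrix.isUnit_iff_isUnit_det G).mp hG),
        Matrix.one_mulVec]⟩
  have h1 : Submodule.map (Q * B * P⁻¹).mulVecLin (Submodule.map P.mulVecLin S)
      = Submodule.map Q.mulVecLin (Submodule.map B.mulVecLin S) := by
    rw [← Submodule.map_comp, ← Matrix.mulVecLin_mul, Matrix.mul_assoc,
      Matrix.nonsing_inv_mul _ hPd, Matrix.mul_one, Matrix.mulVecLin_mul, Submodule.map_comp]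
  have h2 : LinearMap.range (Q * L * G).mulVecLin
      = Submodule.map Q.mulVecLin (LinearMap.range L.mulVecLin) := by
    rw [Matrix.mulVecLin_mul, LinearMap.range_comp,
      LinearMap.range_eq_top.mpr hGsurj, Submodule.map_top,
      Matrix.mulVecLin_mul, LinearMap.range_comp]
  rw [h1, h2, ← Submodule.map_sup]
  have h3 : (Q * A * P⁻¹).mulVecLin
      = Q.mulVecLin ∘ₗ (A * P⁻¹).mulVecLin := by
    rw [Matrix.mul_assoc, Matrix.mulVecLin_mul]
  rw [h3, Submodule.comap_comp]
  rw [Submodule.comap_map_eq_of_injective hQinj]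
  rw [Matrix.mulVecLin_mul, Submodule.comap_comp]
  exact comap_inv_eq_map P hP _

lemma comap_feedback (A : Matrix (Fin l) (Fin n) ℝ) (L : Matrix (Fin l) (Fin m) ℝ)
    (F : Matrix (Fin m) (Fin n) ℝ) (T : Submodule ℝ (Fin l → ℝ))
    (hLT : LinearMap.range L.mulVecLin ≤ T) :
    Submodule.comap (A + L * F).mulVecLin T = Submodule.comap A.mulVecLin T := by
  ext x
  simp only [Submodule.mem_comap, Matrix.mulVecLin_apply, Matrix.add_mulVec]
  have hmem : (L * F).mulVec x ∈ T := by
    rw [← Matrix.mulVec_mulVec]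
    exact hLT ⟨F.mulVec x, rfl⟩
  constructor
  · intro h
    have := T.sub_mem h hmem
    simpa using this
  · intro h; exact T.add_mem h hmem

lemma sup_feedback (A : Matrix (Fin l) (Fin n) ℝ) (L : Matrix (Fin l) (Fin m) ℝ)
    (F : Matrix (Fin m) (Fin n) ℝ) (S : Submodule ℝ (Fin n → ℝ)) :
    Submodule.map (A + L * F).mulVecLin S ⊔ LinearMap.range L.mulVecLin
    = Submodule.map A.mulVecLin S ⊔ LinearMap.range L.mulVecLin := by
  apply le_antisymm
  · apply sup_le _ le_sup_right
    rintro _ ⟨x, hx, rfl⟩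
    simp only [Matrix.mulVecLin_apply, Matrix.add_mulVec]
    exact Submodule.add_mem _ (le_sup_left (α := Submodule ℝ (Fin l → ℝ)) ⟨x, hx, rfl⟩)
      (le_sup_right (α := Submodule ℝ (Fin l → ℝ))
        (by rw [← Matrix.mulVec_mulVec]; exact ⟨F.mulVec x, rfl⟩))
  · apply sup_le _ le_sup_right
    rintro _ ⟨x, hx, rfl⟩
    have : A.mulVecLin x = (A + L * F).mulVecLin x - L.mulVecLin (F.mulVecLin x) := by
      simp [Matrix.mulVecLin_apply, Matrix.add_mulVec, Matrix.mulVec_mulVec]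
    rw [this]
    exact Submodule.sub_mem _ (le_sup_left (α := Submodule ℝ (Fin l → ℝ)) ⟨x, hx, rfl⟩)
      (le_sup_right (α := Submodule ℝ (Fin l → ℝ)) ⟨F.mulVecLin x, rfl⟩)

end Aux


/-- The augmented Wong sequences transform naturally under external feedback equivalence:
`𝒱ᵢ(Ẽ,H̃,L̃) = P 𝒱ᵢ(E,H,L)` and `𝒲ᵢ(Ẽ,H̃,L̃) = P 𝒲ᵢ(E,H,L)`. -/
theorem stmt11 (l n m : ℕ) (E H : Matrix (Fin l) (Fin n) ℝ) (L : Matrix (Fin l) (Fin m) ℝ)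
    (Q : Matrix (Fin l) (Fin l) ℝ) (P : Matrix (Fin n) (Fin n) ℝ)
    (F : Matrix (Fin m) (Fin n) ℝ) (G : Matrix (Fin m) (Fin m) ℝ)
    (hQ : IsUnit Q) (hP : IsUnit P) (hG : IsUnit G)
    (Et Ht : Matrix (Fin l) (Fin n) ℝ) (Lt : Matrix (Fin l) (Fin m) ℝ)
    (hEt : Et = Q * E * P⁻¹) (hHt : Ht = Q * (H + L * F) * P⁻¹) (hLt : Lt = Q * L * G)
    (V Vt W Wt : ℕ → Submodule ℝ (Fin n → ℝ))
    (hV0 : V 0 = ⊤) (hVt0 : Vt 0 = ⊤) (hW0 : W 0 = ⊥) (hWt0 : Wt 0 = ⊥)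
    (hV : ∀ i, V (i + 1) = Submodule.comap H.mulVecLin
      (Submodule.map E.mulVecLin (V i) ⊔ LinearMap.range L.mulVecLin))
    (hVt : ∀ i, Vt (i + 1) = Submodule.comap Ht.mulVecLin
      (Submodule.map Et.mulVecLin (Vt i) ⊔ LinearMap.range Lt.mulVecLin))
    (hW : ∀ i, W (i + 1) = Submodule.comap E.mulVecLin
      (Submodule.map H.mulVecLin (W i) ⊔ LinearMap.range L.mulVecLin))
    (hWt : ∀ i, Wt (i + 1) = Submodule.comap Et.mulVecLin
      (Submodule.map Ht.mulVecLin (Wt i) ⊔ LinearMap.range Lt.mulVecLin)) :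
    ∀ i, Vt i = Submodule.map P.mulVecLin (V i) ∧
      Wt i = Submodule.map P.mulVecLin (W i) := by
  have hPsurj : Function.Surjective P.mulVecLin := by
    intro y
    exact ⟨P⁻¹.mulVec y, by
      simp [Matrix.mulVecLin_apply, Matrix.mulVec_mulVec,
        Matrix.mul_nonsing_inv _ ((Matrix.isUnit_iff_isUnit_det P).mp hP),
        Matrix.one_mulVec]⟩
  intro i
  induction i with
  | zero =>
    constructor
    · rw [hVt0, hV0, Submodule.map_top, LinearMap.range_eq_top.mpr hPsurj]
    · rw [hWt0, hW0, Submodule.map_bot]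
  | succ i ih =>
    obtain ⟨ihV, ihW⟩ := ih
    refine ⟨?_, ?_⟩
    · rw [hVt i, hV i, ihV, hEt, hHt, hLt, key (H + L * F) E L Q P G hQ hP hG (V i),
        comap_feedback H L F _ le_sup_right]
    · rw [hWt i, hW i, ihW, hEt, hHt, hLt, key E (H + L * F) L Q P G hQ hP hG (W i),
        sup_feedback H L F (W i)]
end

section
/- Let q ≤ min(l,n) and let E = [[I_q, 0],[0,0]] ∈ ℝ^{l×n}, H = [[H₁,H₂],[H₃,H₄]], L = [L₁;L₂] with H₁ ∈ ℝ^{q×q}, L₁ ∈ ℝ^{q×m}. Define A = [[H₁,H₂],[0,0]] ∈ ℝ^{n×n}, B^w = [[L₁,0],[0,I_{n−q}]] ∈ ℝ^{n×(m+n−q)}, C = [H₃,H₄] ∈ ℝ^{(l−q)×n}, D^w = [L₂,0] ∈ ℝ^{(l−q)×(m+n−q)}. Then for every subspace V ⊆ ℝⁿ, the preimage under the stacked map x ↦ (Ax, Cx) of the subspace (V × {0}) + Im[B^w; D^w] equals H⁻¹(EV + Im L); consequently the controlled-invariant subspace sequence of (A,B^w,C,D^w) coincides with the augmented Wong sequence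 𝒱_i of (E,H,L). -/
/-!
Let `π : (y, z) ↦ (y₁, z)` drop the last `r` coordinates of the state part. Then
`π ∘ (A, C) = H`, `π` maps `V × {0}` onto `EV` and `Im [Bʷ; Dʷ]` onto `Im L`, and `ker π`
lies in `Im [Bʷ; Dʷ]` thanks to the identity block of `Bʷ`. Since a submodule containing `ker π` is the preimage of
its image under `π`, both sides of the recursion step agree; the sequences then agree by induction.
-/

open Matrix

section Explicitation

variable {R : Type*} [CommRing R] {q r p m : Type*} [Fintype q] [Fintype r] [Fintype p]
  [Fintype m] [DecidableEq q] [DecidableEq p]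

variable (R q r p) in
def explicitationProj : (q ⊕ r → R) × (p → R) →ₗ[R] (q ⊕ p → R) :=
  (fromBlocks (1 : Matrix q q R) 0 0 (0 : Matrix p r R)).mulVecLin.coprod
    (fromRows (0 : Matrix q p R) 1).mulVecLin

theorem explicitationProj_comp_prod (H₁ : Matrix q q R) (H₂ : Matrix q r R)
    (H₃ : Matrix p q R) (H₄ : Matrix p r R) :
    explicitationProj R q r p ∘ₗ
        (fromBlocks H₁ H₂ 0 0).mulVecLin.prod (fromCols H₃ H₄).mulVecLin =
      (fromBlocks H₁ H₂ H₃ H₄).mulVecLin := by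
  refine LinearMap.ext fun x => funext fun i => ?_
  rcases i with i | i <;> simp [explicitationProj, fromBlocks_mulVec, fromCols_mulVec]

theorem explicitationProj_comp_inl :
    explicitationProj R q r p ∘ₗ LinearMap.inl R _ _ =
      (fromBlocks (1 : Matrix q q R) 0 0 (0 : Matrix p r R)).mulVecLin :=
  LinearMap.coprod_inl _ _

theorem range_explicitationProj_comp_prod [DecidableEq r] (L₁ : Matrix q m R)
    (L₂ : Matrix p m R) :
    LinearMap.range (explicitationProj R q r p ∘ₗ
        (fromBlocks L₁ 0 0 (1 : Matrix r r R)).mulVecLin.prod (fromCols L₂ 0).mulVecLin) =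
      LinearMap.range (fromRows L₁ L₂).mulVecLin := by
  have hcomp : explicitationProj R q r p ∘ₗ
        (fromBlocks L₁ 0 0 (1 : Matrix r r R)).mulVecLin.prod (fromCols L₂ 0).mulVecLin =
      (fromRows L₁ L₂).mulVecLin ∘ₗ LinearMap.funLeft R R Sum.inl := by
    refine LinearMap.ext fun x => funext fun i => ?_
    rcases i with i | i <;> simp [explicitationProj, fromBlocks_mulVec, fromCols_mulVec] <;> rfl
  rw [hcomp, LinearMap.range_comp_of_range_eq_top]
  exact LinearMap.range_eq_top.2
    (LinearMap.funLeft_surjective_of_injective _ _ _ Sum.inl_injective)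

theorem ker_explicitationProj_le_range [DecidableEq r] (L₁ : Matrix q m R)
    (L₂ : Matrix p m R) :
    LinearMap.ker (explicitationProj R q r p) ≤
      LinearMap.range ((fromBlocks L₁ 0 0 (1 : Matrix r r R)).mulVecLin.prod
        (fromCols L₂ 0).mulVecLin) := by
  rintro ⟨y, z⟩ h
  have hy : ∀ i, y (Sum.inl i) = 0 := fun i => by
    simpa [explicitationProj, fromBlocks_mulVec] using congrFun h (Sum.inl i)
  have hz : z = 0 := funext fun i => by
    simpa [explicitationProj, fromBlocks_mulVec] using congrFun h (Sum.inr i)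
  refine ⟨Sum.elim 0 (y ∘ Sum.inr), Prod.ext (funext fun i => ?_) ?_⟩
  · rcases i with i | i <;> simp [fromBlocks_mulVec, hy]
  · simp [fromCols_mulVec, hz]

theorem comap_explicitation_eq_comap_wong [DecidableEq r] (H₁ : Matrix q q R)
    (H₂ : Matrix q r R) (H₃ : Matrix p q R) (H₄ : Matrix p r R) (L₁ : Matrix q m R)
    (L₂ : Matrix p m R) (V : Submodule R (q ⊕ r → R)) :
    Submodule.comap ((fromBlocks H₁ H₂ 0 0).mulVecLin.prod (fromCols H₃ H₄).mulVecLin)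
        (V.prod ⊥ ⊔ LinearMap.range ((fromBlocks L₁ 0 0 (1 : Matrix r r R)).mulVecLin.prod
          (fromCols L₂ 0).mulVecLin)) =
      Submodule.comap (fromBlocks H₁ H₂ H₃ H₄).mulVecLin
        (Submodule.map (fromBlocks (1 : Matrix q q R) 0 0 (0 : Matrix p r R)).mulVecLin V ⊔
          LinearMap.range (fromRows L₁ L₂).mulVecLin) := by
  rw [← Submodule.comap_map_eq_self (le_sup_of_le_right (ker_explicitationProj_le_range L₁ L₂)),
    ← Submodule.comap_comp, explicitationProj_comp_prod, Submodule.map_sup, ← Submodule.map_inl,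
    ← Submodule.map_comp, explicitationProj_comp_inl, ← LinearMap.range_comp,
    range_explicitationProj_comp_prod]

end Explicitation

/-- For the explicitation `(A, Bʷ, C, Dʷ)` of the DACS `(E, H, L)` in the indicated block form,
one recursion step of the controlled-invariant subspace sequence coincides with one step of the
augmented Wong sequence, and consequently the two sequences coincide. -/
theorem stmt12 (q r p m : ℕ)
    (H₁ : Matrix (Fin q) (Fin q) ℝ) (H₂ : Matrix (Fin q) (Fin r) ℝ)
    (H₃ : Matrix (Fin p) (Fin q) ℝ) (H₄ : Matrix (Fin p) (Fin r) ℝ)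
    (L₁ : Matrix (Fin q) (Fin m) ℝ) (L₂ : Matrix (Fin p) (Fin m) ℝ)
    (E : Matrix (Fin q ⊕ Fin p) (Fin q ⊕ Fin r) ℝ)
    (Hm : Matrix (Fin q ⊕ Fin p) (Fin q ⊕ Fin r) ℝ)
    (L : Matrix (Fin q ⊕ Fin p) (Fin m) ℝ)
    (A : Matrix (Fin q ⊕ Fin r) (Fin q ⊕ Fin r) ℝ)
    (Bw : Matrix (Fin q ⊕ Fin r) (Fin m ⊕ Fin r) ℝ)
    (C : Matrix (Fin p) (Fin q ⊕ Fin r) ℝ)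
    (Dw : Matrix (Fin p) (Fin m ⊕ Fin r) ℝ)
    (hE : E = Matrix.fromBlocks 1 0 0 0)
    (hH : Hm = Matrix.fromBlocks H₁ H₂ H₃ H₄)
    (hL : L = Matrix.fromRows L₁ L₂)
    (hA : A = Matrix.fromBlocks H₁ H₂ 0 0)
    (hBw : Bw = Matrix.fromBlocks L₁ 0 0 1)
    (hC : C = Matrix.fromCols H₃ H₄)
    (hDw : Dw = Matrix.fromCols L₂ 0) :
    (∀ V : Submodule ℝ (Fin q ⊕ Fin r → ℝ),
      Submodule.comap (A.mulVecLin.prod C.mulVecLin)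
        ((Submodule.prod V ⊥) ⊔ LinearMap.range (Bw.mulVecLin.prod Dw.mulVecLin)) =
      Submodule.comap Hm.mulVecLin
        (Submodule.map E.mulVecLin V ⊔ LinearMap.range L.mulVecLin)) ∧
    ∀ V₁ V₂ : ℕ → Submodule ℝ (Fin q ⊕ Fin r → ℝ),
      V₁ 0 = ⊤ → V₂ 0 = ⊤ →
      (∀ i, V₁ (i + 1) = Submodule.comap (A.mulVecLin.prod C.mulVecLin)
        ((Submodule.prod (V₁ i) ⊥) ⊔ LinearMap.range (Bw.mulVecLin.prod Dw.mulVecLin))) →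
      (∀ i, V₂ (i + 1) = Submodule.comap Hm.mulVecLin
        (Submodule.map E.mulVecLin (V₂ i) ⊔ LinearMap.range L.mulVecLin)) →
      ∀ i, V₁ i = V₂ i := by
  subst hE hH hL hA hBw hC hDw
  refine ⟨comap_explicitation_eq_comap_wong H₁ H₂ H₃ H₄ L₁ L₂, ?_⟩
  intro V₁ V₂ h₁0 h₂0 h₁succ h₂succ i
  induction i with
  | zero => rw [h₁0, h₂0]
  | succ i ih => rw [h₁succ, h₂succ, ih, comap_explicitation_eq_comap_wong]
end

section
/- Let E = [[I_q,0],[0,0]] ∈ ℝ^{l×n} and Ẽ = [[I_{q̃},0],[0,0]] ∈ ℝ^{l×n}. Suppose Q ∈ GL(l,ℝ) and P ∈ GL(n,ℝ) satisfy Ẽ = Q E P⁻¹. Write Q = [[Q₁,Q₂],[Q₃,Q₄]] with Q₁ ∈ ℝ^{q̃×q̃} and P⁻¹ = [[P₁,P₂],[P₃,P₄]] with P₁ ∈ ℝ^{q×q}. Then q = q̃, P₂ = 0, Q₃ = 0, Q₁P₁ = I, and consequently Q₁, P₁, Q₄, P₄ are all invertible. -/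
/-!
Multiplying by invertible matrices preserves rank, so `q = rank E = rank Ẽ = q̃`. Reindexing
`Fin l` and `Fin n` as `Fin q ⊕ Fin (· - q)` turns `Ẽ = Q E P⁻¹` into the block identity
`[[Q₁P₁, Q₁P₂], [Q₃P₁, Q₃P₂]] = [[1, 0], [0, 0]]`. From `Q₁P₁ = 1` we also get `P₁Q₁ = 1`, so
`Q₁P₂ = 0` and `Q₃P₁ = 0` force `P₂ = 0` and `Q₃ = 0`. Then `Q` and `P⁻¹` are invertible and block
triangular, so their diagonal blocks are invertible.
-/

open Matrix

section BlockEquiv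

variable {m q : ℕ} (h : q ≤ m)

def blockEquiv : Fin q ⊕ Fin (m - q) ≃ Fin m :=
  finSumFinEquiv.trans (finCongr (Nat.add_sub_cancel' h))

lemma blockEquiv_inl_mk (x : Fin m) (hx : (x : ℕ) < q) :
    blockEquiv h (Sum.inl ⟨x, hx⟩) = x :=
  rfl

lemma blockEquiv_inr_mk (x : Fin m) (hx : q ≤ (x : ℕ)) :
    blockEquiv h (Sum.inr ⟨x - q, by omega⟩) = x :=
  Fin.ext (by simp [blockEquiv]; omega)

variable {R : Type*} [Zero R] {p : ℕ} (hp : q ≤ p)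

lemma apply_eq_zero_of_toBlocks₁₂_submatrix_blockEquiv_eq_zero {M : Matrix (Fin m) (Fin p) R}
    (hM : (M.submatrix (blockEquiv h) (blockEquiv hp)).toBlocks₁₂ = 0)
    (i : Fin m) (j : Fin p) (hi : (i : ℕ) < q) (hj : q ≤ (j : ℕ)) : M i j = 0 := by
  have hij := congrFun₂ hM ⟨i, hi⟩ ⟨j - q, by omega⟩
  rwa [toBlocks₁₂, of_apply, submatrix_apply, blockEquiv_inl_mk, blockEquiv_inr_mk _ _ hj] at hij

lemma apply_eq_zero_of_toBlocks₂₁_submatrix_blockEquiv_eq_zero {M : Matrix (Fin m) (Fin p) R}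
    (hM : (M.submatrix (blockEquiv h) (blockEquiv hp)).toBlocks₂₁ = 0)
    (i : Fin m) (j : Fin p) (hi : q ≤ (i : ℕ)) (hj : (j : ℕ) < q) : M i j = 0 := by
  have hij := congrFun₂ hM ⟨i - q, by omega⟩ ⟨j, hj⟩
  rwa [toBlocks₂₁, of_apply, submatrix_apply, blockEquiv_inl_mk, blockEquiv_inr_mk _ _ hi] at hij

end BlockEquiv

def cornerOne (R : Type*) [Zero R] [One R] (l n q : ℕ) : Matrix (Fin l) (Fin n) R :=
  of fun i j => if (i : ℕ) = (j : ℕ) ∧ (i : ℕ) < q then 1 else 0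

lemma cornerOne_submatrix_blockEquiv {R : Type*} [Zero R] [One R] {l n q : ℕ}
    (hl : q ≤ l) (hn : q ≤ n) :
    (cornerOne R l n q).submatrix (blockEquiv hl) (blockEquiv hn) = fromBlocks 1 0 0 0 := by
  ext (i | i) (j | j) <;> simp [cornerOne, blockEquiv, one_apply, Fin.ext_iff]
  omega

lemma rank_fromBlocks_one_zero_zero_zero {R m m' n' : Type*} [CommRing R] [StrongRankCondition R]
    [Fintype m] [Fintype n'] [DecidableEq m] :
    (fromBlocks (1 : Matrix m m R) 0 0 (0 : Matrix m' n' R)).rank = Fintype.card m := by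
  apply le_antisymm
  · have hfac : fromRows (1 : Matrix m m R) (0 : Matrix m' m R) *
        fromCols (1 : Matrix m m R) (0 : Matrix m n' R) = fromBlocks 1 0 0 0 := by
      rw [fromRows_mul_fromCols]
      simp
    rw [← hfac]
    exact (rank_mul_le_left _ _).trans (rank_le_card_width _)
  · calc Fintype.card m = (1 : Matrix m m R).rank := rank_one.symm
      _ = ((fromBlocks (1 : Matrix m m R) 0 0 (0 : Matrix m' n' R)).submatrix
            Sum.inl Sum.inl).rank := congrArg rank (toBlocks_fromBlocks₁₁ _ _ _ _).symm
      _ ≤ _ := rank_submatrix_le _ _ _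

lemma rank_cornerOne {R : Type*} [CommRing R] [StrongRankCondition R] {l n q : ℕ}
    (hl : q ≤ l) (hn : q ≤ n) : (cornerOne R l n q).rank = q := by
  rw [← rank_submatrix _ (blockEquiv hl) (blockEquiv hn), cornerOne_submatrix_blockEquiv,
    rank_fromBlocks_one_zero_zero_zero, Fintype.card_fin]

section Blocks

variable {R m m' n' : Type*} [CommRing R] [Fintype m] [Fintype m'] [Fintype n']
  [DecidableEq m]

lemma blocks_of_mul_fromBlocks_one_mul_eq (Q : Matrix (m ⊕ m') (m ⊕ m') R)
    (P : Matrix (m ⊕ n') (m ⊕ n') R)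
    (h : Q * fromBlocks (1 : Matrix m m R) 0 0 (0 : Matrix m' n' R) * P = fromBlocks 1 0 0 0) :
    Q.toBlocks₁₁ * P.toBlocks₁₁ = 1 ∧ P.toBlocks₁₂ = 0 ∧ Q.toBlocks₂₁ = 0 := by
  rw [← fromBlocks_toBlocks Q, ← fromBlocks_toBlocks P, fromBlocks_multiply,
    fromBlocks_multiply] at h
  simp only [Matrix.mul_one, Matrix.mul_zero, Matrix.zero_mul, add_zero] at h
  obtain ⟨h₁₁, h₁₂, h₂₁, -⟩ := fromBlocks_inj.mp h
  have h₁₁' : P.toBlocks₁₁ * Q.toBlocks₁₁ = 1 := mul_eq_one_comm.mp h₁₁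
  refine ⟨h₁₁, ?_, ?_⟩
  · calc P.toBlocks₁₂ = P.toBlocks₁₁ * Q.toBlocks₁₁ * P.toBlocks₁₂ := by rw [h₁₁', Matrix.one_mul]
      _ = 0 := by rw [Matrix.mul_assoc, h₁₂, Matrix.mul_zero]
  · calc Q.toBlocks₂₁ = Q.toBlocks₂₁ * (P.toBlocks₁₁ * Q.toBlocks₁₁) := by rw [h₁₁', Matrix.mul_one]
      _ = 0 := by rw [← Matrix.mul_assoc, h₂₁, Matrix.zero_mul]

variable [DecidableEq m'] [DecidableEq n'] (M : Matrix (m ⊕ m') (m ⊕ m') R) (hM : IsUnit M)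
include hM

lemma isUnit_toBlocks₁₁_and_toBlocks₂₂_of_toBlocks₂₁_eq_zero (h : M.toBlocks₂₁ = 0) :
    IsUnit M.toBlocks₁₁ ∧ IsUnit M.toBlocks₂₂ := by
  rw [← fromBlocks_toBlocks M, h] at hM
  exact isUnit_fromBlocks_zero₂₁.mp hM

lemma isUnit_toBlocks₁₁_and_toBlocks₂₂_of_toBlocks₁₂_eq_zero (h : M.toBlocks₁₂ = 0) :
    IsUnit M.toBlocks₁₁ ∧ IsUnit M.toBlocks₂₂ := by
  rw [← fromBlocks_toBlocks M, h] at hM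
  exact isUnit_fromBlocks_zero₁₂.mp hM

end Blocks

/-- If `Ẽ = Q E P⁻¹` with `E = [[I_q,0],[0,0]]`, `Ẽ = [[I_q̃,0],[0,0]]`, `Q, P` invertible, then
`q = q̃`, the blocks `P₂` and `Q₃` vanish, `Q₁ P₁ = I`, and the corner blocks
`Q₁, P₁, Q₄, P₄` are invertible. -/
theorem stmt16 (l n q qt : ℕ) (hql : q ≤ l) (hqn : q ≤ n) (hqtl : qt ≤ l) (hqtn : qt ≤ n)
    (E Et : Matrix (Fin l) (Fin n) ℝ)
    (hE : E = Matrix.of fun (i : Fin l) (j : Fin n) => if (i : ℕ) = (j : ℕ) ∧ (i : ℕ) < q then (1 : ℝ) else 0)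
    (hEt : Et = Matrix.of fun (i : Fin l) (j : Fin n) => if (i : ℕ) = (j : ℕ) ∧ (i : ℕ) < qt then (1 : ℝ) else 0)
    (Q : Matrix (Fin l) (Fin l) ℝ) (P : Matrix (Fin n) (Fin n) ℝ)
    (hQ : IsUnit Q) (hP : IsUnit P)
    (heq : Et = Q * E * P⁻¹) :
    q = qt ∧
    (∀ i j : Fin n, (i : ℕ) < q → q ≤ (j : ℕ) → P⁻¹ i j = 0) ∧
    (∀ i j : Fin l, qt ≤ (i : ℕ) → (j : ℕ) < qt → Q i j = 0) ∧
    (∀ i j : Fin q, ∑ k : Fin q,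
        Q (Fin.castLE hql i) (Fin.castLE hql k) * P⁻¹ (Fin.castLE hqn k) (Fin.castLE hqn j) =
      if i = j then 1 else 0) ∧
    IsUnit (Matrix.of fun i j : Fin q => Q (Fin.castLE hql i) (Fin.castLE hql j)) ∧
    IsUnit (Matrix.of fun i j : Fin q => P⁻¹ (Fin.castLE hqn i) (Fin.castLE hqn j)) ∧
    IsUnit (Matrix.of fun i j : Fin (l - q) =>
      Q (Fin.cast (Nat.add_sub_cancel' hql) (Fin.natAdd q i))
        (Fin.cast (Nat.add_sub_cancel' hql) (Fin.natAdd q j))) ∧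
    IsUnit (Matrix.of fun i j : Fin (n - q) =>
      P⁻¹ (Fin.cast (Nat.add_sub_cancel' hqn) (Fin.natAdd q i))
        (Fin.cast (Nat.add_sub_cancel' hqn) (Fin.natAdd q j))) := by
  subst hE hEt
  change cornerOne ℝ l n qt = Q * cornerOne ℝ l n q * P⁻¹ at heq
  have hPinv : IsUnit P⁻¹ := isUnit_nonsing_inv_iff.mpr hP
  obtain rfl : q = qt := by
    have hrank := congrArg rank heq
    rwa [rank_mul_eq_left_of_isUnit_det _ _ ((isUnit_iff_isUnit_det _).mp hPinv),
      rank_mul_eq_right_of_isUnit_det _ _ ((isUnit_iff_isUnit_det _).mp hQ),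
      rank_cornerOne hqtl hqtn, rank_cornerOne hql hqn, eq_comm] at hrank
  have hblock : Q.submatrix (blockEquiv hql) (blockEquiv hql) *
      fromBlocks (1 : Matrix (Fin q) (Fin q) ℝ) 0 0 (0 : Matrix (Fin (l - q)) (Fin (n - q)) ℝ) *
      P⁻¹.submatrix (blockEquiv hqn) (blockEquiv hqn) = fromBlocks 1 0 0 0 := by
    rw [← cornerOne_submatrix_blockEquiv hql hqn, submatrix_mul_equiv, submatrix_mul_equiv, ← heq]
  obtain ⟨hQP, hP₁₂, hQ₂₁⟩ := blocks_of_mul_fromBlocks_one_mul_eq _ _ hblock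
  obtain ⟨hQ₁₁, hQ₂₂⟩ := isUnit_toBlocks₁₁_and_toBlocks₂₂_of_toBlocks₂₁_eq_zero _
    ((isUnit_submatrix_equiv _ _).mpr hQ) hQ₂₁
  obtain ⟨hP₁₁, hP₂₂⟩ := isUnit_toBlocks₁₁_and_toBlocks₂₂_of_toBlocks₁₂_eq_zero _
    ((isUnit_submatrix_equiv _ _).mpr hPinv) hP₁₂
  refine ⟨rfl, apply_eq_zero_of_toBlocks₁₂_submatrix_blockEquiv_eq_zero hqn hqn hP₁₂,
    apply_eq_zero_of_toBlocks₂₁_submatrix_blockEquiv_eq_zero hql hql hQ₂₁, fun i j => ?_,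
    hQ₁₁, hP₁₁, hQ₂₂, hP₂₂⟩
  have hij := congrFun₂ hQP i j
  rwa [mul_apply, one_apply] at hij
end

section
/- Let A ∈ ℝ^{n×n}, B ∈ ℝ^{n×m}, C ∈ ℝ^{p×n}, D ∈ ℝ^{p×m}, K ∈ ℝ^{n×p}, F ∈ ℝ^{m×n}. Define the conditioned-invariant sequence 𝒲₀ = {0}, 𝒲_{i+1} = [A B]((𝒲_i × ℝ^m) ∩ ker[C D]), and the corresponding sequence 𝒲̃_i for the output-injected and feedback-transformed system (A + KC + BF + KDF, B + KD, C + DF, D). Then 𝒲̃_i = 𝒲_i for all i ∈ ℕ. -/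
open Matrix

/-- The conditioned-invariant subspace sequence `𝒲₀ = 0`,
`𝒲_{i+1} = [A B]((𝒲ᵢ × ℝᵐ) ∩ ker [C D])` is invariant under output injection `K` and state
feedback `F`. -/
theorem stmt18 (n m p : ℕ)
    (A : Matrix (Fin n) (Fin n) ℝ) (B : Matrix (Fin n) (Fin m) ℝ)
    (C : Matrix (Fin p) (Fin n) ℝ) (D : Matrix (Fin p) (Fin m) ℝ)
    (K : Matrix (Fin n) (Fin p) ℝ) (F : Matrix (Fin m) (Fin n) ℝ)
    (W Wt : ℕ → Submodule ℝ (Fin n → ℝ))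
    (hW0 : W 0 = ⊥) (hWt0 : Wt 0 = ⊥)
    (hW : ∀ i, W (i + 1) =
      Submodule.map (LinearMap.coprod A.mulVecLin B.mulVecLin)
        ((Submodule.prod (W i) ⊤) ⊓
          LinearMap.ker (LinearMap.coprod C.mulVecLin D.mulVecLin)))
    (hWt : ∀ i, Wt (i + 1) =
      Submodule.map
        (LinearMap.coprod (A + K * C + B * F + K * D * F).mulVecLin (B + K * D).mulVecLin)
        ((Submodule.prod (Wt i) ⊤) ⊓
          LinearMap.ker (LinearMap.coprod (C + D * F).mulVecLin D.mulVecLin))) :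
    ∀ i, Wt i = W i := by
  intro i
  induction i with
  | zero => rw [hW0, hWt0]
  | succ i ih =>
    rw [hW, hWt, ih]
    ext x
    simp only [Submodule.mem_map, Submodule.mem_inf, Submodule.mem_prod,
      LinearMap.mem_ker, LinearMap.coprod_apply, Submodule.mem_top, and_true,
      Prod.exists, Matrix.mulVecLin_apply, Matrix.add_mulVec, Matrix.mulVec_add,
      ← Matrix.mulVec_mulVec]
    constructor
    · rintro ⟨w, u, ⟨hw, hker⟩, hx⟩
      refine ⟨w, F *ᵥ w + u, ⟨hw, ?_⟩, ?_⟩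
      · rw [Matrix.mulVec_add]
        linear_combination (norm := module) hker
      · rw [Matrix.mulVec_add, ← hx]
        have h : K *ᵥ (C *ᵥ w) + K *ᵥ (D *ᵥ (F *ᵥ w)) + K *ᵥ (D *ᵥ u)
            = K *ᵥ (C *ᵥ w + D *ᵥ (F *ᵥ w) + D *ᵥ u) := by
          simp [Matrix.mulVec_add]
        rw [hker] at h
        simp only [Matrix.mulVec_zero] at h
        linear_combination (norm := module) -h
    · rintro ⟨w, u, ⟨hw, hker⟩, hx⟩
      refine ⟨w, u - F *ᵥ w, ⟨hw, ?_⟩, ?_⟩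
      · rw [Matrix.mulVec_sub]
        linear_combination (norm := module) hker
      · have h : K *ᵥ (C *ᵥ w) + K *ᵥ (D *ᵥ u) = 0 := by
          have := congrArg (K *ᵥ ·) hker
          simpa [Matrix.mulVec_add] using this
        simp only [Matrix.mulVec_sub, ← hx]
        linear_combination (norm := module) h
end
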